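/- arXiv:1410.3615 — 5 statements merged into one kernel-verified Lean document; each statement's English description precedes it below -/
import Mathlib

section
/- If a real A ∈ 2^ω is Δ⁰₂ (i.e., A has a recursive approximation) and A is not K-trivial, then A ∉ KT(Δ⁰₂) and A ∉ LK(Δ⁰₂). -/
/-! Common framework: prefix-free Kolmogorov complexity via a universal
prefix-free oracle machine, Δ⁰₂ functions and orders, Turing and wtt
reducibility, Ω, and the uniform measure on Cantor space. -/

/-- Finite binary strings, `2^{<ω}`. -/
abbrev BinStr := List Bool

/-- Reals, i.e. infinite binary sequences `2^ω`. -/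
abbrev Seq2 := ℕ → Bool

/-- The initial segment `A↾n` of a real `A ∈ 2^ω`. -/
def restrict (A : Seq2) (n : ℕ) : BinStr := (List.range n).map A

/-- A prefix-free oracle machine, presented as a computable enumeration of
axioms `(τ, p, y)`, meaning: on any oracle extending `τ`, the machine halts on
program `p` with output `y`.  Consistency says that for compatible oracle
strings the halting programs form a prefix-free set and outputs are unique. -/
structure PrefixOracleMachine where
  axioms : ℕ → Option (BinStr × BinStr × BinStr)
  axioms_computable : Computable axioms
  consistent : ∀ s t τ₁ p₁ y₁ τ₂ p₂ y₂,
    axioms s = some (τ₁, p₁, y₁) → axioms t = some (τ₂, p₂, y₂) →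
    (τ₁ <+: τ₂ ∨ τ₂ <+: τ₁) → p₁ <+: p₂ → p₁ = p₂ ∧ y₁ = y₂

/-- `M.Computes A p y` : with oracle `A`, machine `M` halts on program `p` with
output `y`. -/
def PrefixOracleMachine.Computes (M : PrefixOracleMachine) (A : Seq2) (p y : BinStr) : Prop :=
  ∃ s τ, M.axioms s = some (τ, p, y) ∧ ∃ n, τ = restrict A n

/-- A universal prefix-free oracle machine: it describes every string (relative
to every oracle), and it simulates every prefix-free oracle machine up to an
additive constant in the length of programs. -/
structure UniversalPrefixMachine extends PrefixOracleMachine where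
  total : ∀ (A : Seq2) (y : BinStr), ∃ p, toPrefixOracleMachine.Computes A p y
  universal : ∀ M : PrefixOracleMachine, ∃ c : ℕ, ∀ (A : Seq2) (p y : BinStr),
    M.Computes A p y →
      ∃ q, toPrefixOracleMachine.Computes A q y ∧ q.length ≤ p.length + c

/-- `K^A(y)` : prefix-free Kolmogorov complexity of `y` relative to oracle `A`. -/
noncomputable def KOr (U : UniversalPrefixMachine) (A : Seq2) (y : BinStr) : ℕ :=
  sInf {n | ∃ p : BinStr, p.length = n ∧ U.toPrefixOracleMachine.Computes A p y}

/-- The all-zeros (recursive) oracle. -/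
def zeroSeq : Seq2 := fun _ => false

/-- `K(y)` : (unrelativized) prefix-free Kolmogorov complexity. -/
noncomputable def Kc (U : UniversalPrefixMachine) (y : BinStr) : ℕ := KOr U zeroSeq y

/-- `K(n)` : the complexity of the string of `n` zeros. -/
noncomputable def KcNat (U : UniversalPrefixMachine) (n : ℕ) : ℕ :=
  Kc U (List.replicate n false)

/-- `A ∈ KT(g)` : `A` is K-trivial up to `g`. -/
def KT (U : UniversalPrefixMachine) (g : ℕ → ℕ) (A : Seq2) : Prop :=
  ∃ c : ℕ, ∀ n : ℕ, Kc U (restrict A n) ≤ KcNat U n + g n + c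

/-- `A ∈ LK(f)` : `A` is low for K up to `f`. -/
def LK (U : UniversalPrefixMachine) (f : BinStr → ℕ) (A : Seq2) : Prop :=
  ∃ c : ℕ, ∀ σ : BinStr, Kc U σ ≤ KOr U A σ + f σ + c

/-- The position of a string in the length-lexicographic ordering of `2^{<ω}`. -/
def strNum (σ : BinStr) : ℕ := σ.foldl (fun n b => 2 * n + (if b then 2 else 1)) 0

/-- A function `ℕ → ℕ` is Δ⁰₂ iff it has a recursive approximation. -/
def Delta02Fun (g : ℕ → ℕ) : Prop :=
  ∃ G : ℕ → ℕ → ℕ, Computable₂ G ∧ ∀ x, ∃ t, ∀ s ≥ t, G s x = g x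

/-- A function `2^{<ω} → ℕ` is Δ⁰₂ iff it has a recursive approximation. -/
def Delta02StrFun (f : BinStr → ℕ) : Prop :=
  ∃ F : ℕ → BinStr → ℕ, Computable₂ F ∧ ∀ σ, ∃ t, ∀ s ≥ t, F s σ = f σ

/-- A real is Δ⁰₂ iff it has a recursive approximation. -/
def Delta02Seq (A : Seq2) : Prop :=
  ∃ F : ℕ → ℕ → Bool, Computable₂ F ∧ ∀ x, ∃ t, ∀ s ≥ t, F s x = A x

/-- An order: an unbounded nondecreasing function `ℕ → ℕ`. -/
def IsOrder (g : ℕ → ℕ) : Prop := Monotone g ∧ ∀ b : ℕ, ∃ m, b < g m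

/-- An order on strings: unbounded and nondecreasing with respect to the
length-lexicographic ordering of `2^{<ω}`. -/
def IsStrOrder (f : BinStr → ℕ) : Prop :=
  (∀ σ τ : BinStr, strNum σ ≤ strNum τ → f σ ≤ f τ) ∧ ∀ b : ℕ, ∃ σ, b < f σ

/-- `A ∈ KT(Δ⁰₂)` : `A` is K-trivial up to every Δ⁰₂ order. -/
def KTDelta (U : UniversalPrefixMachine) (A : Seq2) : Prop :=
  ∀ g : ℕ → ℕ, Delta02Fun g → IsOrder g → KT U g A

/-- `A ∈ LK(Δ⁰₂)` : `A` is low for K up to every Δ⁰₂ order. -/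
def LKDelta (U : UniversalPrefixMachine) (A : Seq2) : Prop :=
  ∀ f : BinStr → ℕ, Delta02StrFun f → IsStrOrder f → LK U f A

/-- A Δ⁰₂ function is finite-to-one approximable if it has a recursive
approximation `F` such that for every `n`, for all but finitely many `m`,
`F s m > n` for all stages `s`. -/
def FinToOneApprox (f : ℕ → ℕ) : Prop :=
  ∃ F : ℕ → ℕ → ℕ, Computable₂ F ∧ (∀ x, ∃ t, ∀ s ≥ t, F s x = f x) ∧
    ∀ n : ℕ, {m : ℕ | ∃ s, F s m ≤ n}.Finite

/-- A Turing functional, presented as a computable enumeration of axioms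
`(τ, n, b)`, meaning: on any oracle extending `τ`, the output bit `n` is `b`. -/
structure TuringFunctional where
  axioms : ℕ → Option (BinStr × ℕ × Bool)
  axioms_computable : Computable axioms
  consistent : ∀ s t τ₁ n₁ b₁ τ₂ n₂ b₂,
    axioms s = some (τ₁, n₁, b₁) → axioms t = some (τ₂, n₂, b₂) →
    (τ₁ <+: τ₂ ∨ τ₂ <+: τ₁) → n₁ = n₂ → b₁ = b₂

/-- `Φ.Computes B A` : `Φ^B = A`. -/
def TuringFunctional.Computes (Φ : TuringFunctional) (B A : Seq2) : Prop :=
  ∀ n : ℕ, ∃ s k, Φ.axioms s = some (restrict B k, n, A n)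

/-- Turing reducibility `A ≤_T B`. -/
def TuringLE (A B : Seq2) : Prop := ∃ Φ : TuringFunctional, Φ.Computes B A

/-- Weak truth-table reducibility `A ≤_wtt B` : a Turing reduction whose use is
bounded by a recursive function. -/
def WttLE (A B : Seq2) : Prop :=
  ∃ (Φ : TuringFunctional) (u : ℕ → ℕ), Computable u ∧
    ∀ n : ℕ, ∃ s k, k ≤ u n ∧ Φ.axioms s = some (restrict B k, n, A n)

/-- The effective join `A ⊕ B`. -/
def join (A B : Seq2) : Seq2 := fun n => if n % 2 = 0 then A (n / 2) else B (n / 2)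

/-- `A` is Martin-Löf random: `K(A↾n) ≥ n - c` for all `n`. -/
def MLRandom (U : UniversalPrefixMachine) (A : Seq2) : Prop :=
  ∃ c : ℕ, ∀ n : ℕ, n ≤ Kc U (restrict A n) + c

/-- `A` is infinitely often K-trivial. -/
def InfOftenKTrivial (U : UniversalPrefixMachine) (A : Seq2) : Prop :=
  ∃ c : ℕ, {n : ℕ | Kc U (restrict A n) ≤ KcNat U n + c}.Infinite

/-- K-reducibility `B ≤_K A`. -/
def KLE (U : UniversalPrefixMachine) (B A : Seq2) : Prop :=
  ∃ c : ℕ, ∀ n : ℕ, Kc U (restrict B n) ≤ Kc U (restrict A n) + c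

/-- LK-reducibility `A ≤_LK B`. -/
def LKLE (U : UniversalPrefixMachine) (A B : Seq2) : Prop :=
  ∃ c : ℕ, ∀ σ : BinStr, KOr U B σ ≤ KOr U A σ + c

/-- `A` is weakly low for K: `K(σ) ≤ K^A(σ) + c` for infinitely many strings σ. -/
def WeaklyLowForK (U : UniversalPrefixMachine) (A : Seq2) : Prop :=
  ∃ c : ℕ, {σ : BinStr | Kc U σ ≤ KOr U A σ + c}.Infinite

/-- Chaitin's Ω : the measure of the domain of the universal machine. -/
noncomputable def Omega (U : UniversalPrefixMachine) : ℝ :=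
  ∑' p : {p : BinStr // ∃ y, U.toPrefixOracleMachine.Computes zeroSeq p y},
    ((2 : ℝ) ^ (p : BinStr).length)⁻¹

/-- The `n`-th binary digit of a real number `x`. -/
noncomputable def realBit (x : ℝ) (n : ℕ) : Bool :=
  decide (⌊x * 2 ^ (n + 1)⌋ % 2 = 1)

/-- `Ω↾n` : the length-`n` initial segment of the binary expansion of Ω. -/
noncomputable def omegaStr (U : UniversalPrefixMachine) (n : ℕ) : BinStr :=
  (List.range n).map (realBit (Omega U))

/-- `A` is low for Ω. -/
def LowForOmega (U : UniversalPrefixMachine) (A : Seq2) : Prop :=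
  ∀ c : ℕ, ∃ n : ℕ, KOr U A (omegaStr U n) + c < n

/-- The uniform (coin-flipping) measure on `2^ω`, obtained as the image of
Lebesgue measure on `[0,1]` under the binary-expansion map. -/
noncomputable def cantorMeasure : MeasureTheory.Measure Seq2 :=
  MeasureTheory.Measure.map (fun x : ℝ => fun n : ℕ => realBit x n)
    (MeasureTheory.volume.restrict (Set.Icc (0 : ℝ) 1))


/-!
Let `d n = K(A↾n) - K(n)`. As `K` is approximable from above and `A` is Δ⁰₂, `d` is Δ⁰₂, and so
is `g n = (max_{m ≤ n} d m) / 2`; it is an order because `A` is not K-trivial, i.e. `d` is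
unbounded. If `K(A↾n) ≤ K(n) + g n + c` for all `n`, the running maximum `M` of `d` satisfies
`M ≤ M / 2 + c`, so `d ≤ 2c` and `A` would be K-trivial. For lowness: a machine that copies its
oracle gives `K^A(A↾n) ≤ K(n) + O(1)`, hence `LK(g ∘ length) ⊆ KT(g)`, and `g ∘ length` is a
Δ⁰₂ order on strings.
-/

open Filter

lemma length_restrict (A : Seq2) (n : ℕ) : (restrict A n).length = n := by
  simp [restrict]

lemma restrict_zeroSeq (n : ℕ) : restrict zeroSeq n = List.replicate n false :=
  List.map_const'.trans (by rw [List.length_range])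

lemma restrict_prefix_restrict (A : Seq2) {m n : ℕ} (h : m ≤ n) :
    restrict A m <+: restrict A n := by
  have : restrict A m = (restrict A n).take m := by
    rw [restrict, restrict, ← List.map_take, List.take_range, min_eq_left h]
  exact this ▸ List.take_prefix _ _

lemma restrict_prefix_or (A : Seq2) (m n : ℕ) :
    restrict A m <+: restrict A n ∨ restrict A n <+: restrict A m :=
  (le_total m n).imp (restrict_prefix_restrict A) (restrict_prefix_restrict A)

lemma exists_eq_restrict_iff {A : Seq2} {τ : BinStr} :
    (∃ n, τ = restrict A n) ↔ τ = restrict A τ.length :=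
  ⟨by rintro ⟨n, rfl⟩; rw [length_restrict], fun h => ⟨_, h⟩⟩

lemma primrec_restrict_zeroSeq : Primrec (restrict zeroSeq) :=
  Primrec.list_map Primrec.list_range (Primrec.const false).to₂

lemma computable₂_map_range {α β : Type} [Primcodable α] [Primcodable β] {v : α → ℕ → β}
    (hv : Computable₂ v) : Computable₂ fun a n => (List.range n).map (v a) := by
  have h : Computable fun p : α × ℕ =>
      Nat.rec (motive := fun _ => List β) [] (fun m l => l ++ [v p.1 m]) p.2 :=
    Computable.nat_rec Computable.snd (Computable.const [])
      ((Computable.list_concat.comp (Computable.snd.comp Computable.snd)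
        (hv.comp (Computable.fst.comp Computable.fst)
          (Computable.fst.comp Computable.snd))).to₂)
  refine (h.of_eq fun ⟨a, n⟩ => ?_ : Computable fun p : α × ℕ => (List.range p.2).map (v p.1))
  induction n with
  | zero => rfl
  | succ n ih => simp_all [List.range_succ]

def LimitComputable {α β : Type} [Primcodable α] [Primcodable β] (f : α → β) : Prop :=
  ∃ F : ℕ → α → β, Computable₂ F ∧ ∀ x, ∀ᶠ s in atTop, F s x = f x

section LimitComputable

variable {α β γ δ : Type} [Primcodable α] [Primcodable β] [Primcodable γ] [Primcodable δ]

lemma delta02Fun_iff {g : ℕ → ℕ} : Delta02Fun g ↔ LimitComputable g := by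
  simp only [Delta02Fun, LimitComputable, eventually_atTop]

lemma delta02StrFun_iff {f : BinStr → ℕ} : Delta02StrFun f ↔ LimitComputable f := by
  simp only [Delta02StrFun, LimitComputable, eventually_atTop]

lemma delta02Seq_iff {A : Seq2} : Delta02Seq A ↔ LimitComputable A := by
  simp only [Delta02Seq, LimitComputable, eventually_atTop]

lemma Computable.limitComputable {f : α → β} (hf : Computable f) : LimitComputable f :=
  ⟨fun _ => f, (hf.comp Computable.snd).to₂, fun _ => .of_forall fun _ => rfl⟩

lemma LimitComputable.comp {g : β → γ} {f : α → β} (hg : LimitComputable g)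
    (hf : LimitComputable f) : LimitComputable (g ∘ f) := by
  obtain ⟨G, hG, hGg⟩ := hg
  obtain ⟨F, hF, hFf⟩ := hf
  refine ⟨fun s x => G s (F s x), hG.comp Computable.fst hF, fun x => ?_⟩
  filter_upwards [hFf x, hGg (f x)] with s hF hG
  rw [hF, hG, Function.comp_apply]

lemma LimitComputable.map₂ {f : α → β} {g : α → γ} {h : β → γ → δ} (hf : LimitComputable f)
    (hg : LimitComputable g) (hh : Computable₂ h) : LimitComputable fun x => h (f x) (g x) := by
  obtain ⟨F, hF, hFf⟩ := hf
  obtain ⟨G, hG, hGg⟩ := hg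
  refine ⟨fun s x => h (F s x) (G s x), hh.comp hF hG, fun x => ?_⟩
  filter_upwards [hFf x, hGg x] with s hF hG
  rw [hF, hG]

lemma LimitComputable.restrict {A : Seq2} (hA : LimitComputable A) :
    LimitComputable (restrict A) := by
  obtain ⟨F, hF, hFA⟩ := hA
  refine ⟨fun s n => (List.range n).map (F s), computable₂_map_range hF, fun n => ?_⟩
  filter_upwards [(eventually_all_finset (Finset.range n)).2 fun m _ => hFA m] with s hs
  exact List.map_congr_left fun m hm => hs m (Finset.mem_range.2 (List.mem_range.1 hm))

lemma partialSups_nat_eq_rec (f : ℕ → ℕ) (n : ℕ) :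
    partialSups f n = Nat.rec (f 0) (fun m acc => max acc (f (m + 1))) n := by
  induction n with
  | zero => exact partialSups_zero f
  | succ n ih => rw [← Order.succ_eq_add_one, partialSups_succ, ih]; rfl

lemma LimitComputable.partialSups {f : ℕ → ℕ} (hf : LimitComputable f) :
    LimitComputable (_root_.partialSups f) := by
  obtain ⟨F, hF, hFf⟩ := hf
  refine ⟨fun s n => _root_.partialSups (F s) n, ?_, fun n => ?_⟩
  · have h := Computable.nat_rec Computable.snd (hF.comp Computable.fst (Computable.const 0))
      ((Primrec.nat_max.to_comp.comp (Computable.snd.comp Computable.snd)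
        (hF.comp (Computable.fst.comp Computable.fst)
          (Computable.succ.comp (Computable.fst.comp Computable.snd)))).to₂)
    exact Computable.to₂ (h.of_eq fun p => (partialSups_nat_eq_rec (F p.1) p.2).symm)
  · filter_upwards [(eventually_all_finset (Finset.Iic n)).2 fun m _ => hFf m] with s hs
    simp only [partialSups_apply]
    exact Finset.sup'_congr _ rfl hs

end LimitComputable

lemma List.foldr_min_le_of_mem {l : List ℕ} {a x : ℕ} (hx : x ∈ l) : l.foldr min a ≤ x := by
  induction l with
  | nil => cases hx
  | cons b l ih =>
    rcases List.mem_cons.1 hx with rfl | hx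
    · exact min_le_left _ _
    · exact (min_le_right _ _).trans (ih hx)

lemma List.le_foldr_min {l : List ℕ} {a b : ℕ} (ha : b ≤ a) (h : ∀ x ∈ l, b ≤ x) :
    b ≤ l.foldr min a := by
  induction l with
  | nil => exact ha
  | cons c l ih => exact le_min (h c (List.mem_cons_self ..)) (ih fun x hx => h x (.tail _ hx))

namespace UniversalPrefixMachine

variable (U : UniversalPrefixMachine)

lemma KOr_le_length {A : Seq2} {p y : BinStr} (h : U.Computes A p y) :
    KOr U A y ≤ p.length :=
  Nat.sInf_le ⟨p, rfl, h⟩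

lemma exists_length_eq_KOr (A : Seq2) (y : BinStr) :
    ∃ p : BinStr, p.length = KOr U A y ∧ U.Computes A p y :=
  Nat.sInf_mem (s := {n | ∃ p : BinStr, p.length = n ∧ U.Computes A p y})
    (let ⟨p, hp⟩ := U.total A y; ⟨p.length, p, rfl, hp⟩)

/-- The axiom of the copying machine indexed by `(s, σ)`: if the `s`-th axiom of `U` is an
oracle-free computation of `0^|σ|` by `p`, then `p` prints the oracle's first `|σ|` bits `σ`. -/
def copyAxiom (q : ℕ × BinStr) : Option (BinStr × BinStr × BinStr) :=
  (U.axioms q.1).bind fun t =>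
    if t.1 = restrict zeroSeq t.1.length ∧ t.2.2 = restrict zeroSeq q.2.length then
      some (q.2, t.2.1, q.2)
    else none

lemma computable_copyAxiom : Computable U.copyAxiom := by
  refine Computable.option_bind (U.axioms_computable.comp Computable.fst)
    (Primrec.to_comp (Primrec.ite ?_ ?_ (Primrec.const none)))
  · exact PrimrecPred.and
      (Primrec.eq.comp (Primrec.fst.comp Primrec.snd)
        (primrec_restrict_zeroSeq.comp
          (Primrec.list_length.comp (Primrec.fst.comp Primrec.snd))))
      (Primrec.eq.comp (Primrec.snd.comp (Primrec.snd.comp Primrec.snd))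
        (primrec_restrict_zeroSeq.comp
          (Primrec.list_length.comp (Primrec.snd.comp Primrec.fst))))
  · exact Primrec.option_some.comp ((Primrec.snd.comp Primrec.fst).pair
      ((Primrec.fst.comp (Primrec.snd.comp Primrec.snd)).pair (Primrec.snd.comp Primrec.fst)))

lemma copyAxiom_eq_some {q : ℕ × BinStr} {τ p y : BinStr} (h : U.copyAxiom q = some (τ, p, y)) :
    y = τ ∧ ∃ ρ, U.axioms q.1 = some (ρ, p, restrict zeroSeq τ.length) ∧
      ρ = restrict zeroSeq ρ.length := by
  simp only [copyAxiom, Option.bind_eq_some_iff] at h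
  obtain ⟨⟨ρ, p', ζ⟩, hax, h⟩ := h
  split_ifs at h with hρζ
  obtain ⟨rfl, rfl, rfl⟩ := Option.some.inj h
  exact ⟨rfl, ρ, hρζ.2 ▸ hax, hρζ.1⟩

def copyMachine : PrefixOracleMachine where
  axioms e := (Encodable.decode e).bind U.copyAxiom
  axioms_computable :=
    Computable.option_bind Computable.decode (U.computable_copyAxiom.comp Computable.snd).to₂
  consistent := by
    intro s t τ₁ p₁ y₁ τ₂ p₂ y₂ h₁ h₂ hτ hp
    simp only [Option.bind_eq_some_iff] at h₁ h₂
    obtain ⟨q₁, -, h₁⟩ := h₁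
    obtain ⟨q₂, -, h₂⟩ := h₂
    obtain ⟨rfl, ρ₁, hax₁, hρ₁⟩ := U.copyAxiom_eq_some h₁
    obtain ⟨rfl, ρ₂, hax₂, hρ₂⟩ := U.copyAxiom_eq_some h₂
    have hρ : ρ₁ <+: ρ₂ ∨ ρ₂ <+: ρ₁ := by
      rw [hρ₁, hρ₂]; exact restrict_prefix_or _ _ _
    obtain ⟨rfl, hlen⟩ := U.consistent _ _ _ _ _ _ _ _ hax₁ hax₂ hρ hp
    have hlen : y₁.length = y₂.length := by
      simpa only [length_restrict] using congrArg List.length hlen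
    exact ⟨rfl, hτ.elim (·.eq_of_length hlen) (·.eq_of_length hlen.symm |>.symm)⟩

lemma copyMachine_computes {A : Seq2} {p : BinStr} {n : ℕ}
    (h : U.Computes zeroSeq p (List.replicate n false)) :
    U.copyMachine.Computes A p (restrict A n) := by
  obtain ⟨s, _, hax, k, rfl⟩ := h
  refine ⟨Encodable.encode (s, restrict A n), restrict A n, ?_, n, rfl⟩
  simp [copyMachine, copyAxiom, Encodable.encodek, hax, length_restrict, restrict_zeroSeq]

lemma exists_KOr_restrict_le : ∃ c : ℕ, ∀ A n, KOr U A (restrict A n) ≤ KcNat U n + c := by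
  obtain ⟨c, hc⟩ := U.universal U.copyMachine
  refine ⟨c, fun A n => ?_⟩
  obtain ⟨p, hp, hcomp⟩ := U.exists_length_eq_KOr zeroSeq (List.replicate n false)
  obtain ⟨q, hq, hqp⟩ := hc A p _ (U.copyMachine_computes hcomp)
  have := U.KOr_le_length hq
  rw [KcNat, Kc, ← hp]
  omega

def oracleFreeLength (y : BinStr) (t : BinStr × BinStr × BinStr) : Option ℕ :=
  if t.1 = restrict zeroSeq t.1.length ∧ t.2.2 = y then some t.2.1.length else none

def KcCandidates (s : ℕ) (y : BinStr) : List ℕ :=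
  ((List.range s).map U.axioms).filterMap fun o => o.bind (oracleFreeLength y)

/-- Stage-`s` upper approximation of `K(y)`; it is `s` as long as no program for `y` has
appeared. -/
def KcApprox (s : ℕ) (y : BinStr) : ℕ :=
  (U.KcCandidates s y).foldr min s

lemma mem_KcCandidates {s x : ℕ} {y : BinStr} :
    x ∈ U.KcCandidates s y ↔ ∃ i < s, ∃ τ p, U.axioms i = some (τ, p, y) ∧
      τ = restrict zeroSeq τ.length ∧ p.length = x := by
  simp only [KcCandidates, List.mem_filterMap, List.mem_map, List.mem_range,
    Option.bind_eq_some_iff, oracleFreeLength, Option.ite_none_right_eq_some, Option.some.injEq]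
  constructor
  · rintro ⟨_, ⟨i, hi, rfl⟩, ⟨τ, p, z⟩, hax, ⟨hτ, rfl⟩, rfl⟩
    exact ⟨i, hi, τ, p, hax, hτ, rfl⟩
  · rintro ⟨i, hi, τ, p, hax, hτ, rfl⟩
    exact ⟨_, ⟨i, hi, rfl⟩, (τ, p, y), hax, ⟨hτ, rfl⟩, rfl⟩

lemma computable₂_KcApprox : Computable₂ U.KcApprox := by
  have hlist : Computable fun q : ℕ × BinStr => ((List.range q.1).map U.axioms, q) :=
    ((computable₂_map_range (v := fun (_ : BinStr) => U.axioms)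
      (U.axioms_computable.comp Computable.snd).to₂).comp Computable.snd Computable.fst).pair
      Computable.id
  have hlen : Primrec₂ fun (y : BinStr) (t : BinStr × BinStr × BinStr) => oracleFreeLength y t :=
    Primrec.ite
      (PrimrecPred.and
        (Primrec.eq.comp (Primrec.fst.comp Primrec.snd)
          (primrec_restrict_zeroSeq.comp
            (Primrec.list_length.comp (Primrec.fst.comp Primrec.snd))))
        (Primrec.eq.comp (Primrec.snd.comp (Primrec.snd.comp Primrec.snd)) Primrec.fst))
      (Primrec.option_some.comp
        (Primrec.list_length.comp (Primrec.fst.comp (Primrec.snd.comp Primrec.snd))))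
      (Primrec.const none)
  have hfold : Primrec fun q : List (Option (BinStr × BinStr × BinStr)) × ℕ × BinStr =>
      (q.1.filterMap fun o => o.bind (oracleFreeLength q.2.2)).foldr min q.2.1 :=
    Primrec.list_foldr
      (Primrec.listFilterMap Primrec.fst
        (Primrec.option_bind Primrec.snd
          (hlen.comp (Primrec.snd.comp (Primrec.snd.comp (Primrec.fst.comp Primrec.fst)))
            Primrec.snd).to₂).to₂)
      (Primrec.fst.comp Primrec.snd)
      (Primrec.nat_min.comp (Primrec.fst.comp Primrec.snd) (Primrec.snd.comp Primrec.snd)).to₂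
  exact Computable.to₂ (hfold.to_comp.comp hlist)

lemma eventually_KcApprox_eq (y : BinStr) : ∀ᶠ s in atTop, U.KcApprox s y = Kc U y := by
  obtain ⟨p, hp, i, τ, hax, hτ⟩ := U.exists_length_eq_KOr zeroSeq y
  filter_upwards [eventually_gt_atTop i, eventually_ge_atTop (Kc U y)] with s hi hs
  refine le_antisymm (List.foldr_min_le_of_mem (U.mem_KcCandidates.2 ?_)) ?_
  · exact ⟨i, hi, τ, p, hax, exists_eq_restrict_iff.1 hτ, hp⟩
  · refine List.le_foldr_min hs fun x hx => ?_
    obtain ⟨j, -, τ', p', hax', hτ', rfl⟩ := U.mem_KcCandidates.1 hx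
    exact U.KOr_le_length ⟨j, τ', hax', exists_eq_restrict_iff.2 hτ'⟩

lemma limitComputable_Kc : LimitComputable (Kc U) :=
  ⟨U.KcApprox, U.computable₂_KcApprox, U.eventually_KcApprox_eq⟩

end UniversalPrefixMachine

lemma isOrder_partialSups_div_two {d : ℕ → ℕ} (hd : ∀ b, ∃ n, b < d n) :
    IsOrder fun n => partialSups d n / 2 := by
  refine ⟨fun m n h => Nat.div_le_div_right ((partialSups d).monotone h), fun b => ?_⟩
  obtain ⟨n, hn⟩ := hd (2 * b + 1)
  have := le_partialSups_of_le d (le_refl n)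
  exact ⟨n, show b < partialSups d n / 2 by omega⟩

/-- The running maximum `M` of `d` satisfies `M ≤ M / 2 + c`. -/
lemma le_two_mul_of_le_partialSups_div_two_add {d : ℕ → ℕ} {c : ℕ}
    (h : ∀ n, d n ≤ partialSups d n / 2 + c) (n : ℕ) : d n ≤ 2 * c := by
  have hM : partialSups d n ≤ partialSups d n / 2 + c :=
    partialSups_le d n _ fun m hm =>
      (h m).trans (Nat.add_le_add_right (Nat.div_le_div_right ((partialSups d).monotone hm)) c)
  have := le_partialSups_of_le d (le_refl n)
  omega

/-- `K(A↾n) - K(n)`, truncated at `0`. -/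
noncomputable def KExcess (U : UniversalPrefixMachine) (A : Seq2) (n : ℕ) : ℕ :=
  Kc U (restrict A n) - KcNat U n

lemma KT_iff_exists_KExcess_le {U : UniversalPrefixMachine} {g : ℕ → ℕ} {A : Seq2} :
    KT U g A ↔ ∃ c, ∀ n, KExcess U A n ≤ g n + c :=
  exists_congr fun _ => forall_congr' fun _ => by rw [KExcess]; omega

lemma limitComputable_KExcess (U : UniversalPrefixMachine) {A : Seq2} (hA : LimitComputable A) :
    LimitComputable (KExcess U A) := by
  have hz : KcNat U = Kc U ∘ restrict zeroSeq :=
    funext fun n => by simp [KcNat, restrict_zeroSeq]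
  exact (U.limitComputable_Kc.comp hA.restrict).map₂
    (hz ▸ U.limitComputable_Kc.comp primrec_restrict_zeroSeq.to_comp.limitComputable)
    Primrec.nat_sub.to_comp

lemma not_KTDelta_of_not_KT_zero (U : UniversalPrefixMachine) {A : Seq2} (hA : Delta02Seq A)
    (hnt : ¬ KT U (fun _ => 0) A) : ¬ KTDelta U A := by
  have hunb : ∀ b, ∃ n, b < KExcess U A n := by
    by_contra! ⟨b, hb⟩
    exact hnt (KT_iff_exists_KExcess_le.2 ⟨b, by simpa using hb⟩)
  intro hKT
  have hg : Delta02Fun fun n => partialSups (KExcess U A) n / 2 :=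
    delta02Fun_iff.2 <|
      (Primrec.nat_div.comp Primrec.id (Primrec.const 2)).to_comp.limitComputable.comp
        (limitComputable_KExcess U (delta02Seq_iff.1 hA)).partialSups
  obtain ⟨c, hc⟩ := KT_iff_exists_KExcess_le.1 (hKT _ hg (isOrder_partialSups_div_two hunb))
  exact hnt (KT_iff_exists_KExcess_le.2 ⟨2 * c, fun n => by
    simpa using le_two_mul_of_le_partialSups_div_two_add hc n⟩)

lemma foldl_strNum_bounds (σ : BinStr) (n : ℕ) :
    (n + 1) * 2 ^ σ.length ≤ σ.foldl (fun n b => 2 * n + (if b then 2 else 1)) n + 1 ∧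
      σ.foldl (fun n b => 2 * n + (if b then 2 else 1)) n + 1 < (n + 2) * 2 ^ σ.length := by
  induction σ generalizing n with
  | nil => simp
  | cons b σ ih =>
    obtain ⟨h₁, h₂⟩ := ih (2 * n + if b then 2 else 1)
    simp only [List.foldl_cons, List.length_cons, pow_succ]
    cases b <;> simp only [Bool.false_eq_true, if_false, if_true] at h₁ h₂ ⊢ <;>
      constructor <;> nlinarith

lemma length_le_of_strNum_le {σ τ : BinStr} (h : strNum σ ≤ strNum τ) :
    σ.length ≤ τ.length := by
  by_contra! hlt
  have hσ := (foldl_strNum_bounds σ 0).1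
  have hτ := (foldl_strNum_bounds τ 0).2
  have := Nat.pow_le_pow_right (n := 2) (by norm_num) hlt
  rw [pow_succ] at this
  simp only [strNum] at h
  omega

lemma IsOrder.isStrOrder_comp_length {g : ℕ → ℕ} (hg : IsOrder g) :
    IsStrOrder fun σ => g σ.length :=
  ⟨fun _ _ h => hg.1 (length_le_of_strNum_le h), fun b =>
    let ⟨m, hm⟩ := hg.2 b; ⟨List.replicate m false, by simpa using hm⟩⟩

/-- Lowness at `σ = A↾n` combined with `K^A(A↾n) ≤ K(n) + O(1)`. -/
lemma KT_of_LK_comp_length (U : UniversalPrefixMachine) {g : ℕ → ℕ} {A : Seq2}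
    (h : LK U (fun σ => g σ.length) A) : KT U g A := by
  obtain ⟨c, hc⟩ := h
  obtain ⟨c', hc'⟩ := U.exists_KOr_restrict_le
  refine ⟨c + c', fun n => ?_⟩
  have h₁ : Kc U (restrict A n) ≤ KOr U A (restrict A n) + g n + c := by
    simpa only [length_restrict] using hc (restrict A n)
  have h₂ := hc' A n
  omega

lemma KTDelta_of_LKDelta (U : UniversalPrefixMachine) {A : Seq2} (h : LKDelta U A) :
    KTDelta U A := fun _ hg hgo =>
  KT_of_LK_comp_length U <| h _
    (delta02StrFun_iff.2 ((delta02Fun_iff.1 hg).comp Computable.list_length.limitComputable))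
    hgo.isStrOrder_comp_length

/-- if a real A is Δ⁰₂ and not K-trivial, then A ∉ KT(Δ⁰₂) and A ∉ LK(Δ⁰₂). -/
theorem stmt0 (U : UniversalPrefixMachine) (A : Seq2)
    (hA : Delta02Seq A) (hnt : ¬ KT U (fun _ => 0) A) :
    ¬ KTDelta U A ∧ ¬ LKDelta U A :=
  have hKT := not_KTDelta_of_not_KT_zero U hA hnt
  ⟨hKT, fun hLK => hKT (KTDelta_of_LKDelta U hLK)⟩
end

section
/- Every Δ⁰₂ order g : ℕ → ℕ is finite-to-one approximable. -/
/-! Replace the stage-`s` guess at `g m` by the running maximum of the stage-`s` guesses at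
`0, …, m` when `m ≤ s`, and by `m` itself when `m > s`.  Since `g` is nondecreasing these guesses
still converge to `g m`.  Take `N` with `n < g N`: a guess `≤ n` at `m` forces `m ≤ n`, or `m < N`,
or `N ≤ m ≤ s` with the stage-`s` guess at `N` still `≤ n`, i.e. `s` precedes the stage where the
guess at `N` settles. -/

def runningMax (f : ℕ → ℕ) (m : ℕ) : ℕ :=
  Nat.rec (f 0) (fun k acc => max acc (f (k + 1))) m

@[simp]
lemma runningMax_succ (f : ℕ → ℕ) (m : ℕ) :
    runningMax f (m + 1) = max (runningMax f m) (f (m + 1)) := rfl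

lemma le_runningMax {f : ℕ → ℕ} {j m : ℕ} (h : j ≤ m) : f j ≤ runningMax f m := by
  induction m with
  | zero => rw [Nat.le_zero.mp h]; rfl
  | succ m ih =>
    rcases Nat.of_le_succ h with h | rfl
    · exact (ih h).trans (le_max_left _ _)
    · exact le_max_right _ _

lemma runningMax_congr {f f' : ℕ → ℕ} {m : ℕ} (h : ∀ j ≤ m, f j = f' j) :
    runningMax f m = runningMax f' m := by
  induction m with
  | zero => exact h 0 le_rfl
  | succ m ih =>
    simp only [runningMax_succ, ih fun j hj => h j (hj.trans m.le_succ), h (m + 1) le_rfl]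

lemma runningMax_of_monotone {f : ℕ → ℕ} (hf : Monotone f) (m : ℕ) : runningMax f m = f m := by
  induction m with
  | zero => rfl
  | succ m ih => simp only [runningMax_succ, ih, max_eq_right (hf m.le_succ)]

lemma Computable₂.runningMax {G : ℕ → ℕ → ℕ} (hG : Computable₂ G) :
    Computable₂ fun s m => runningMax (G s) m :=
  Computable.nat_rec Computable.snd (hG.comp Computable.fst (Computable.const 0))
    (Primrec.nat_max.to_comp.comp (Computable.snd.comp Computable.snd)
      (hG.comp (Computable.fst.comp Computable.fst)
        (Computable.succ.comp (Computable.fst.comp Computable.snd)))).to₂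

def finiteToOneApprox (G : ℕ → ℕ → ℕ) (s m : ℕ) : ℕ :=
  if m ≤ s then runningMax (G s) m else m

lemma Computable₂.finiteToOneApprox {G : ℕ → ℕ → ℕ} (hG : Computable₂ G) :
    Computable₂ (finiteToOneApprox G) :=
  (Computable.cond (Primrec.nat_le.decide.to_comp.comp Computable.snd Computable.fst)
    hG.runningMax Computable.snd).of_eq fun p => by
      simp only [Bool.cond_decide]; rfl

lemma finiteToOneApprox_eventually_eq {G : ℕ → ℕ → ℕ} {g : ℕ → ℕ}
    (hG : ∀ x, ∀ᶠ s in Filter.atTop, G s x = g x) (hg : Monotone g) (m : ℕ) :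
    ∀ᶠ s in Filter.atTop, finiteToOneApprox G s m = g m := by
  have hsettled : ∀ᶠ s in Filter.atTop, ∀ j ∈ Finset.range (m + 1), G s j = g j :=
    (Filter.eventually_all_finset _).2 fun j _ => hG j
  filter_upwards [hsettled, Filter.eventually_ge_atTop m] with s hs hms
  rw [finiteToOneApprox, if_pos hms, ← runningMax_of_monotone hg m]
  exact runningMax_congr fun j hj => hs j (Finset.mem_range_succ_iff.2 hj)

lemma finite_setOf_finiteToOneApprox_le {G : ℕ → ℕ → ℕ} {g : ℕ → ℕ}
    (hG : ∀ x, ∀ᶠ s in Filter.atTop, G s x = g x) (hg : ∀ b, ∃ m, b < g m) (n : ℕ) :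
    {m | ∃ s, finiteToOneApprox G s m ≤ n}.Finite := by
  obtain ⟨N, hN⟩ := hg n
  obtain ⟨T, hT⟩ := Filter.eventually_atTop.1 (hG N)
  refine (Set.finite_Iic (n + N + T)).subset ?_
  rintro m ⟨s, hle⟩
  rw [Set.mem_Iic]
  unfold finiteToOneApprox at hle
  split_ifs at hle with hms
  · by_contra! hbig
    have hGN : G s N ≤ n := (le_runningMax (by omega)).trans hle
    have hsT : s < T := by
      by_contra! hTs
      rw [hT s hTs] at hGN
      omega
    omega
  · omega

/-- every Δ⁰₂ order is finite-to-one approximable. -/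
theorem stmt1 (g : ℕ → ℕ) (hg : Delta02Fun g) (hord : IsOrder g) :
    FinToOneApprox g := by
  obtain ⟨G, hGc, hGlim⟩ := hg
  have hG : ∀ x, ∀ᶠ s in Filter.atTop, G s x = g x := fun x =>
    Filter.eventually_atTop.2 (hGlim x)
  exact ⟨finiteToOneApprox G, hGc.finiteToOneApprox,
    fun m => Filter.eventually_atTop.1 (finiteToOneApprox_eventually_eq hG hord.1 m),
    finite_setOf_finiteToOneApprox_le hG hord.2⟩
end

section
/- Every finite-to-one approximable function f : ℕ → ℕ pointwise dominates some Δ⁰₂ order, i.e., there is a Δ⁰₂ order h : ℕ → ℕ with h(n) ≤ f(n) for all n. -/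
/-
The order is the running minimum from the right, `h n = min_{m ≥ n} f m`. It is unbounded
because `f` takes each value only finitely often. To approximate it, replace the infinite tail
by the window `[n, n + s]` and `f` by `F s`: once every `m` with `F s m ≤ h n` for some `s`
(a finite set) has settled, together with a witness `m ≥ n` of `f m = h n`, the minimum over
the window is exactly `h n`.
-/

open Filter

noncomputable def tailMin (f : ℕ → ℕ) (n : ℕ) : ℕ := sInf (f '' Set.Ici n)

section tailMin

variable {f : ℕ → ℕ}

lemma tailMin_le {n m : ℕ} (h : n ≤ m) : tailMin f n ≤ f m := Nat.sInf_le ⟨m, h, rfl⟩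

lemma exists_ge_eq_tailMin (f : ℕ → ℕ) (n : ℕ) : ∃ m ≥ n, f m = tailMin f n :=
  Nat.sInf_mem (Set.image_nonempty.2 Set.nonempty_Ici)

lemma monotone_tailMin (f : ℕ → ℕ) : Monotone (tailMin f) := fun n n' hnn' => by
  obtain ⟨m, hm, hfm⟩ := exists_ge_eq_tailMin f n'
  exact hfm ▸ tailMin_le (hnn'.trans hm)

lemma isOrder_tailMin (hf : ∀ b, {m | f m ≤ b}.Finite) : IsOrder (tailMin f) := by
  refine ⟨monotone_tailMin f, fun b => ?_⟩
  obtain ⟨N, hN⟩ := (hf b).bddAbove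
  obtain ⟨m, hm, hfm⟩ := exists_ge_eq_tailMin f (N + 1)
  refine ⟨N + 1, hfm ▸ lt_of_not_ge fun hle => ?_⟩
  have := hN hle
  omega

end tailMin

def prefixMin (g : ℕ → ℕ) (k : ℕ) : ℕ := Nat.rec (g 0) (fun j m => min m (g (j + 1))) k

section prefixMin

variable {g : ℕ → ℕ}

lemma prefixMin_le {i k : ℕ} (h : i ≤ k) : prefixMin g k ≤ g i := by
  induction k with
  | zero => rw [Nat.le_zero.1 h]; rfl
  | succ k ih =>
    rcases Nat.of_le_succ h with hi | rfl
    · exact (min_le_left _ _).trans (ih hi)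
    · exact min_le_right _ _

lemma exists_le_prefixMin_eq (g : ℕ → ℕ) (k : ℕ) : ∃ i ≤ k, prefixMin g k = g i := by
  induction k with
  | zero => exact ⟨0, le_rfl, rfl⟩
  | succ k ih =>
    obtain ⟨i, hi, hgi⟩ := ih
    show ∃ i ≤ k + 1, min (prefixMin g k) (g (k + 1)) = g i
    rcases min_choice (prefixMin g k) (g (k + 1)) with h | h
    · exact ⟨i, hi.trans k.le_succ, h.trans hgi⟩
    · exact ⟨k + 1, le_rfl, h⟩

end prefixMin

lemma Computable.prefixMin {α : Type*} [Primcodable α] {g : α → ℕ → ℕ} {k : α → ℕ}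
    (hg : Computable₂ g) (hk : Computable k) : Computable fun a => prefixMin (g a) (k a) :=
  Computable.nat_rec hk (hg.comp Computable.id (Computable.const 0))
    (Primrec.nat_min.to_comp.comp (Computable.snd.comp Computable.snd)
      (hg.comp Computable.fst (Computable.succ.comp (Computable.fst.comp Computable.snd)))).to₂

lemma eventually_prefixMin_eq_tailMin {F : ℕ → ℕ → ℕ} {f : ℕ → ℕ}
    (hconv : ∀ x, ∀ᶠ s in atTop, F s x = f x) (hfin : ∀ b, {m | ∃ s, F s m ≤ b}.Finite)
    (n : ℕ) : ∀ᶠ s in atTop, prefixMin (fun i => F s (n + i)) s = tailMin f n := by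
  obtain ⟨m₀, hm₀, hfm₀⟩ := exists_ge_eq_tailMin f n
  set T := {m | ∃ s, F s m ≤ tailMin f n}
  have hsettled : ∀ᶠ s in atTop, ∀ m ∈ insert m₀ T, F s m = f m :=
    ((hfin _).insert m₀).eventually_all.2 fun m _ => hconv m
  filter_upwards [hsettled, eventually_ge_atTop (m₀ - n)] with s hs hwindow
  have hle : prefixMin (fun i => F s (n + i)) s ≤ tailMin f n := by
    have := prefixMin_le (g := fun i => F s (n + i)) hwindow
    rwa [Nat.add_sub_cancel' hm₀, hs m₀ (Set.mem_insert _ _), hfm₀] at this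
  obtain ⟨i, -, hi⟩ := exists_le_prefixMin_eq (fun i => F s (n + i)) s
  have hmem : n + i ∈ T := ⟨s, hi ▸ hle⟩
  have hge : tailMin f n ≤ F s (n + i) :=
    (hs _ (Set.mem_insert_of_mem _ hmem)).symm ▸ tailMin_le (Nat.le_add_right n i)
  exact le_antisymm hle (hi ▸ hge)

/-- every finite-to-one approximable function pointwise dominates a Δ⁰₂ order. -/
theorem stmt2 (f : ℕ → ℕ) (hf : FinToOneApprox f) :
    ∃ h : ℕ → ℕ, Delta02Fun h ∧ IsOrder h ∧ ∀ n, h n ≤ f n := by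
  obtain ⟨F, hF, hconv, hfin⟩ := hf
  have hconv' : ∀ x, ∀ᶠ s in atTop, F s x = f x := fun x => eventually_atTop.2 (hconv x)
  have hf_finite : ∀ b, {m | f m ≤ b}.Finite := fun b => (hfin b).subset fun m hm =>
    let ⟨s, hs⟩ := (hconv' m).exists
    ⟨s, hs ▸ hm⟩
  have happrox : Computable₂ fun s n => prefixMin (fun i => F s (n + i)) s :=
    Computable.prefixMin (hF.comp (Computable.fst.comp Computable.fst)
        (Primrec.nat_add.to_comp.comp (Computable.snd.comp Computable.fst) Computable.snd))
      Computable.fst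
  refine ⟨tailMin f, ⟨_, happrox, fun n => ?_⟩, isOrder_tailMin hf_finite,
    fun n => tailMin_le le_rfl⟩
  exact eventually_atTop.1 (eventually_prefixMin_eq_tailMin hconv' hfin n)
end

section
/- There exists a Δ⁰₂ function f : ℕ → ℕ that is finite-to-one (every value has only finitely many preimages) but that has no finite-to-one approximation, i.e., f is not finite-to-one approximable. -/
/-!
Diagonalize against every candidate approximation `F t m := Φ_e⟨t, m⟩`. Its attempts are
the points `⟨e, i⟩`, and `diagCounter e s` is the attempt current at stage `s`: it moves on
as soon as some `F t ⟨e, i⟩ = 2e` is found. Set `f ⟨e, i⟩ = 2e` if the counter settles on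
`i`, and `f m = 2m + 1` otherwise; then `f` is injective and approximated by guessing that
the current attempt is final. If `F` approximates `f`, the counter cannot settle on any `i`,
since `F t ⟨e, i⟩` would eventually equal `f ⟨e, i⟩ = 2e`; so every attempt gets some
`F t ⟨e, i⟩ = 2e`, and `F` takes a value `≤ 2e` at infinitely many arguments.
-/

open Filter Nat.Partrec Nat.Partrec.Code

section StageCounter

variable (P : ℕ → ℕ → Prop) [DecidableRel P]

def stageCounter : ℕ → ℕ
  | 0 => 0
  | s + 1 => stageCounter s + if P s (stageCounter s) then 1 else 0

variable {P}

theorem stageCounter_mono : Monotone (stageCounter P) :=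
  monotone_nat_of_le_succ fun s => by simp only [stageCounter]; omega

theorem exists_stage_of_lt_stageCounter {i s : ℕ} (h : i < stageCounter P s) :
    ∃ s', P s' i := by
  induction s with
  | zero => simp [stageCounter] at h
  | succ s ih =>
    by_cases hi : i < stageCounter P s
    · exact ih hi
    · by_cases hP : P s (stageCounter P s)
      · simp only [stageCounter, hP, if_true] at h
        obtain rfl : i = stageCounter P s := by omega
        exact ⟨s, hP⟩
      · simp only [stageCounter, hP, if_false, add_zero] at h
        exact absurd h hi

theorem eventually_not_of_eventually_stageCounter_eq {L : ℕ}
    (h : ∀ᶠ s in atTop, stageCounter P s = L) : ∀ᶠ s in atTop, ¬ P s L := by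
  filter_upwards [h, (tendsto_add_atTop_nat 1).eventually h] with s hs hs1 hP
  simp [stageCounter, hs, hP] at hs1

theorem Primrec.stageCounter {α : Type*} [Primcodable α] {P : α → ℕ → ℕ → Prop}
    [∀ a, DecidableRel (P a)] (hP : PrimrecPred fun x : α × ℕ × ℕ => P x.1 x.2.1 x.2.2) :
    Primrec₂ fun a => stageCounter (P a) := by
  have hstep : Primrec₂ fun (a : α) (p : ℕ × ℕ) => p.2 + if P a p.1 p.2 then 1 else 0 :=
    Primrec.nat_add.comp (Primrec.snd.comp Primrec.snd)
      (Primrec.ite (hP.comp (Primrec.pair Primrec.fst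
        (Primrec.pair (Primrec.fst.comp Primrec.snd) (Primrec.snd.comp Primrec.snd))))
        (Primrec.const 1) (Primrec.const 0))
  refine (Primrec.nat_rec (Primrec.const 0) hstep).of_eq fun a s => ?_
  induction s with
  | zero => rfl
  | succ s ih => simp only [_root_.stageCounter, ← ih]

end StageCounter

theorem Monotone.eventually_eq_or_eventually_ne {u : ℕ → ℕ} (hu : Monotone u) (i : ℕ) :
    (∀ᶠ s in atTop, u s = i) ∨ ∀ᶠ s in atTop, u s ≠ i := by
  by_cases hlt : ∃ s, i < u s
  · obtain ⟨s, hs⟩ := hlt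
    exact .inr (eventually_atTop.2 ⟨s, fun t ht => (hs.trans_le (hu ht)).ne'⟩)
  · push Not at hlt
    by_cases heq : ∃ s, u s = i
    · obtain ⟨s, hs⟩ := heq
      exact .inl (eventually_atTop.2 ⟨s, fun t ht => le_antisymm (hlt t) (hs ▸ hu ht)⟩)
    · push Not at heq
      exact .inr (Eventually.of_forall heq)

theorem Monotone.exists_lt_of_forall_not_eventually_eq {u : ℕ → ℕ} (hu : Monotone u)
    (h : ∀ i, ¬ ∀ᶠ s in atTop, u s = i) (i : ℕ) : ∃ s, i < u s := by
  have stuck : ∀ i s₀, i ≤ u s₀ → ∃ s, i < u s := fun i s₀ hs₀ => by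
    by_contra! hle
    exact h i (eventually_atTop.2 ⟨s₀, fun s hs => le_antisymm (hle s) (hs₀.trans (hu hs))⟩)
  induction i with
  | zero => exact stuck 0 0 (Nat.zero_le _)
  | succ i ih => exact ih.elim fun s hs => stuck (i + 1) s hs

namespace Nat.Partrec.Code

def HitsBy (c : Code) (s m n : ℕ) : Prop :=
  ∃ t < s, evaln s c (Nat.pair t m) = some n

instance (c : Code) (s m n : ℕ) : Decidable (HitsBy c s m n) :=
  inferInstanceAs (Decidable (∃ t < s, _))

variable {c : Code} {F : ℕ → ℕ → ℕ}

theorem exists_eq_of_hitsBy (hc : eval c = fun x => Part.some (F x.unpair.1 x.unpair.2))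
    {s m n : ℕ} (h : HitsBy c s m n) : ∃ t, F t m = n := by
  obtain ⟨t, -, ht⟩ := h
  have := evaln_sound (Option.mem_def.2 ht)
  simp only [hc, Nat.unpair_pair, Part.mem_some_iff] at this
  exact ⟨t, this.symm⟩

theorem eventually_hitsBy (hc : eval c = fun x => Part.some (F x.unpair.1 x.unpair.2))
    {t m : ℕ} : ∀ᶠ s in atTop, HitsBy c s m (F t m) := by
  obtain ⟨k, hk⟩ := evaln_complete.1 (show F t m ∈ eval c (Nat.pair t m) by simp [hc])
  filter_upwards [eventually_gt_atTop t, eventually_ge_atTop k] with s hts hks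
  exact ⟨t, hts, evaln_mono hks hk⟩

theorem exists_code_eval_eq_of_computable₂ (hF : Computable₂ F) :
    ∃ c : Code, eval c = fun x => Part.some (F x.unpair.1 x.unpair.2) :=
  exists_code.1 <| Partrec.nat_iff.1 <|
    hF.comp (Computable.fst.comp Computable.unpair) (Computable.snd.comp Computable.unpair)

end Nat.Partrec.Code

theorem PrimrecPred.hitsBy {α : Type*} [Primcodable α] {c : α → Code} {s m n : α → ℕ}
    (hc : Primrec c) (hs : Primrec s) (hm : Primrec m) (hn : Primrec n) :
    PrimrecPred fun a => Code.HitsBy (c a) (s a) (m a) (n a) := by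
  have hrel : PrimrecRel fun (t : ℕ) (a : α) =>
      evaln (s a) (c a) (Nat.pair t (m a)) = some (n a) :=
    Primrec.eq.comp (primrec_evaln.comp (Primrec.pair (Primrec.pair (hs.comp Primrec.snd)
        (hc.comp Primrec.snd)) (Primrec₂.natPair.comp Primrec.fst (hm.comp Primrec.snd))))
      (Primrec.option_some.comp (hn.comp Primrec.snd))
  exact (hrel.exists_mem_list.comp (Primrec.list_range.comp hs) Primrec.id).of_eq fun a => by
    simp [Code.HitsBy]

def diagCounter (e : ℕ) : ℕ → ℕ :=
  stageCounter fun s i => (Denumerable.ofNat Code e).HitsBy s (Nat.pair e i) (2 * e)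

open Classical in
noncomputable def diagFun (m : ℕ) : ℕ :=
  if ∀ᶠ s in atTop, diagCounter m.unpair.1 s = m.unpair.2 then 2 * m.unpair.1 else 2 * m + 1

def diagApprox (s m : ℕ) : ℕ :=
  if diagCounter m.unpair.1 s = m.unpair.2 then 2 * m.unpair.1 else 2 * m + 1

theorem diagCounter_mono (e : ℕ) : Monotone (diagCounter e) :=
  stageCounter_mono

theorem primrec_diagCounter : Primrec₂ diagCounter :=
  Primrec.stageCounter <| PrimrecPred.hitsBy ((Primrec.ofNat Code).comp Primrec.fst)
    (Primrec.fst.comp Primrec.snd)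
    (Primrec₂.natPair.comp Primrec.fst (Primrec.snd.comp Primrec.snd))
    (Primrec.nat_mul.comp (Primrec.const 2) Primrec.fst)

theorem primrec_diagApprox : Primrec₂ diagApprox := by
  have he : Primrec fun p : ℕ × ℕ => p.2.unpair.1 :=
    Primrec.fst.comp (Primrec.unpair.comp Primrec.snd)
  have hi : Primrec fun p : ℕ × ℕ => p.2.unpair.2 :=
    Primrec.snd.comp (Primrec.unpair.comp Primrec.snd)
  exact Primrec.ite (Primrec.eq.comp (primrec_diagCounter.comp he Primrec.fst) hi)
    (Primrec.nat_mul.comp (Primrec.const 2) he)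
    (Primrec.succ.comp (Primrec.nat_mul.comp (Primrec.const 2) Primrec.snd))

theorem eventually_diagApprox_eq (m : ℕ) : ∀ᶠ s in atTop, diagApprox s m = diagFun m := by
  rcases (diagCounter_mono _).eventually_eq_or_eventually_ne m.unpair.2 with hlim | hne
  · filter_upwards [hlim] with s hs
    rw [diagApprox, diagFun, if_pos hs, if_pos hlim]
  · have hlim : ¬ ∀ᶠ s in atTop, diagCounter m.unpair.1 s = m.unpair.2 := fun hlim =>
      let ⟨_, hs, hs'⟩ := (hlim.and hne).exists; hs' hs
    filter_upwards [hne] with s hs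
    rw [diagApprox, diagFun, if_neg hs, if_neg hlim]

theorem diagFun_pair {e i : ℕ} (h : ∀ᶠ s in atTop, diagCounter e s = i) :
    diagFun (Nat.pair e i) = 2 * e := by
  simp [diagFun, h]

theorem diagFun_injective : Function.Injective diagFun := by
  intro m₁ m₂ h
  unfold diagFun at h
  split_ifs at h with h₁ h₂ h₂ <;> try omega
  have he : m₁.unpair.1 = m₂.unpair.1 := by omega
  rw [← he] at h₂
  obtain ⟨_, hs₁, hs₂⟩ := (h₁.and h₂).exists
  rw [← Nat.pair_unpair m₁, ← Nat.pair_unpair m₂, Nat.pair_eq_pair]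
  exact ⟨he, hs₁.symm.trans hs₂⟩

theorem diagCounter_not_eventually_eq {c : Code} {F : ℕ → ℕ → ℕ}
    (hc : eval c = fun x => Part.some (F x.unpair.1 x.unpair.2))
    (hlim : ∀ x, ∃ t, ∀ s ≥ t, F s x = diagFun x) (i : ℕ) :
    ¬ ∀ᶠ s in atTop, diagCounter (Encodable.encode c) s = i := by
  intro h
  obtain ⟨t, ht⟩ := hlim (Nat.pair (Encodable.encode c) i)
  have hFt := (ht t le_rfl).trans (diagFun_pair h)
  have hnot := eventually_not_of_eventually_stageCounter_eq h
  rw [Denumerable.ofNat_encode] at hnot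
  obtain ⟨_, hhit, hnhit⟩ := ((eventually_hitsBy (t := t) hc).and hnot).exists
  exact hnhit (hFt ▸ hhit)

theorem not_finToOneApprox_diagFun : ¬ FinToOneApprox diagFun := by
  rintro ⟨F, hF, hlim, hfin⟩
  obtain ⟨c, hc⟩ := exists_code_eval_eq_of_computable₂ hF
  set e := Encodable.encode c
  have hunbdd := (diagCounter_mono e).exists_lt_of_forall_not_eventually_eq
    (diagCounter_not_eventually_eq hc hlim)
  refine (hfin (2 * e)).not_infinite <| Set.infinite_of_injective_forall_mem
    (f := Nat.pair e) (fun i j hij => (Nat.pair_eq_pair.1 hij).2) fun i => ?_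
  obtain ⟨s, hs⟩ := hunbdd i
  obtain ⟨s', hs'⟩ := exists_stage_of_lt_stageCounter hs
  rw [Denumerable.ofNat_encode] at hs'
  obtain ⟨t, ht⟩ := exists_eq_of_hitsBy hc hs'
  exact ⟨t, ht.le⟩

/-- there is a Δ⁰₂ finite-to-one function that is not finite-to-one approximable. -/
theorem stmt3 :
    ∃ f : ℕ → ℕ, Delta02Fun f ∧ (∀ n : ℕ, {m : ℕ | f m = n}.Finite) ∧
      ¬ FinToOneApprox f :=
  ⟨diagFun,
    ⟨diagApprox, primrec_diagApprox.to_comp,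
      fun m => eventually_atTop.1 (eventually_diagApprox_eq m)⟩,
    fun n => (Set.finite_singleton n).preimage diagFun_injective.injOn,
    not_finToOneApprox_diagFun⟩
end

section
/- For any real B ∈ 2^ω there is a real A ∈ 2^ω with B ≤_T A (A computes B) such that A ∈ KT(Δ⁰₂); consequently KT(Δ⁰₂) is cofinal in the Turing degrees. -/
/-!
Enumerate the partial computable functions as uniformly primitive recursive approximations
`approx e s x`, and let `cost e x` be the settling time plus the limit of the `e`-th one at `x` when
it converges everywhere (and `0` otherwise). Take `A = {p₁ < p₂ < ⋯}` where `pᵢ₊₁` is even or odd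
according to `B i` and exceeds both `pᵢ` and `cost e i` for all `e ≤ i`; reading parities, `A`
computes `B`. If `k` elements of `A` lie below `n`, then every cost used to define `p₁, …, pₖ` has
settled by stage `n`, so `A↾n` is computable from `n` and the `2k` bits telling which `e < k`
converge and what `B↾k` is: `K(A↾n) ≤ K(n) + 4k + O(1)`. For a Δ⁰₂ order `g`, the function
`j ↦ min {n | 4 (j + 1) ≤ g n}` is Δ⁰₂, hence below `pⱼ₊₁` for almost all `j`, which gives
`4k ≤ g n + O(1)`.
-/

namespace KTrivialCofinal
open Nat.Partrec (Code)
open Nat.Partrec.Code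

def lastDefined (F : ℕ → Option ℕ) : ℕ → ℕ
  | 0 => 0
  | t + 1 => (F t).getD (lastDefined F t)

theorem lastDefined_eq {F : ℕ → Option ℕ} {N v t₀ : ℕ} (ht₀ : t₀ < N) (hdef : (F t₀).isSome)
    (hval : ∀ t, t₀ ≤ t → ∀ w, F t = some w → w = v) : lastDefined F N = v := by
  induction N with
  | zero => omega
  | succ N ih =>
    rcases hN : F N with _ | w
    · have : t₀ ≠ N := by rintro rfl; simp [hN] at hdef
      simpa [lastDefined, hN] using ih (by omega)
    · simp [lastDefined, hN, hval N (by omega) w hN]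

/-- The `e`-th partial computable function, read as an approximation `(t, x) ↦ φₑ⟨t, x⟩`:
at stage `s` we use the largest `t ≤ s` whose computation halts within `s` steps. -/
def approx (e s x : ℕ) : ℕ :=
  lastDefined (fun t => evaln s (Denumerable.ofNat Code e) (Nat.pair t x)) (s + 1)

def HasLim (e x : ℕ) : Prop := ∃ t, ∀ s, t ≤ s → approx e s x = approx e t x

def Converges (e : ℕ) : Prop := ∀ x, HasLim e x

open Classical in
noncomputable def settle (e x : ℕ) : ℕ := if h : HasLim e x then Nat.find h else 0

noncomputable def limit (e x : ℕ) : ℕ := approx e (settle e x) x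

theorem approx_eq_limit {e x s : ℕ} (h : HasLim e x) (hs : settle e x ≤ s) :
    approx e s x = limit e x := by
  classical
  simp only [limit, settle, dif_pos h] at hs ⊢
  exact Nat.find_spec h s hs

theorem limit_eq_of_eventually {e x S v : ℕ} (h : HasLim e x)
    (hS : ∀ s, S ≤ s → approx e s x = v) : limit e x = v := by
  rw [← approx_eq_limit h (le_max_right S _), hS _ (le_max_left _ _)]

/-- The last change of `approx e · x` up to stage `n`. -/
def settleAt (n e x : ℕ) : ℕ := Nat.findGreatest (fun t => approx e (t - 1) x ≠ approx e n x) n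

theorem settleAt_eq {e x n : ℕ} (h : HasLim e x) (hn : settle e x ≤ n) :
    settleAt n e x = settle e x := by
  classical
  have hsettle : settle e x = Nat.find h := by simp only [settle, dif_pos h]
  refine Nat.findGreatest_eq_iff.2 ⟨hn, fun hne hstable => ?_, fun k hk hkn => ?_⟩
  · refine Nat.find_min h (m := settle e x - 1) (by omega) fun s hs => ?_
    rcases Nat.eq_or_lt_of_le hs with rfl | hlt
    · rfl
    · rw [hstable, approx_eq_limit h (by omega), approx_eq_limit h hn]
  · rw [not_not, approx_eq_limit h (by omega), approx_eq_limit h hn]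

section Primrec
open Primrec

theorem primrec_approx : Primrec fun a : ℕ × ℕ × ℕ => approx a.1 a.2.1 a.2.2 := by
  have hstep : Primrec₂ fun (a : ℕ × ℕ × ℕ) (p : ℕ × ℕ) =>
      (evaln a.2.1 (Denumerable.ofNat Code a.1) (Nat.pair p.1 a.2.2)).getD p.2 :=
    option_getD.comp (primrec_evaln.comp ((fst.comp (snd.comp fst)).pair
      ((Primrec.ofNat Code).comp (fst.comp fst)) |>.pair
      (Primrec₂.natPair.comp (fst.comp snd) (snd.comp (snd.comp fst))))) (snd.comp snd)
  refine (nat_rec' (succ.comp (fst.comp snd)) (const 0) hstep).of_eq fun a => ?_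
  suffices ∀ F N, lastDefined F N = Nat.rec 0 (fun t acc => (F t).getD acc) N by
    simp only [approx, this]
  intro F N
  induction N with
  | zero => rfl
  | succ N ih => rw [lastDefined, ih]

theorem primrec_settleAt : Primrec fun a : ℕ × ℕ × ℕ => settleAt a.1 a.2.1 a.2.2 :=
  nat_findGreatest fst <| PrimrecPred.not <| Primrec.eq.comp
    (primrec_approx.comp ((fst.comp (snd.comp fst)).pair
      ((nat_sub.comp snd (const 1)).pair (snd.comp (snd.comp fst)))))
    (primrec_approx.comp ((fst.comp (snd.comp fst)).pair
      ((fst.comp fst).pair (snd.comp (snd.comp fst)))))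

end Primrec

theorem approx_encode_eventually_eq {c : Code} {G : ℕ → ℕ → ℕ}
    (hc : eval c = fun m => Part.some (G m.unpair.1 m.unpair.2)) {x t₀ v : ℕ}
    (hv : ∀ t, t₀ ≤ t → G t x = v) : ∃ S, ∀ s, S ≤ s → approx (Encodable.encode c) s x = v := by
  have hmem : ∀ t, G t x ∈ eval c (Nat.pair t x) := fun t => by simp [hc]
  obtain ⟨k₀, hk₀⟩ := evaln_complete.1 (hmem t₀)
  refine ⟨max t₀ k₀, fun s hs => lastDefined_eq (t₀ := t₀) (by omega) ?_ fun t ht w hw => ?_⟩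
  · rw [Denumerable.ofNat_encode, Option.isSome_iff_exists]
    exact ⟨_, evaln_mono (by omega) hk₀⟩
  · rw [Denumerable.ofNat_encode] at hw
    rw [← hv t ht]
    exact Part.mem_unique (evaln_sound (Option.mem_def.2 hw)) (hmem t)

theorem exists_converges_limit_eq {f : ℕ → ℕ} (hf : Delta02Fun f) :
    ∃ e, Converges e ∧ ∀ x, limit e x = f x := by
  obtain ⟨G, hG, hGf⟩ := hf
  obtain ⟨c, hc⟩ : ∃ c : Code, eval c = fun m => Part.some (G m.unpair.1 m.unpair.2) :=
    exists_code.1 (Partrec.nat_iff.1 (hG.comp (Computable.fst.comp Primrec.unpair.to_comp)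
      (Computable.snd.comp Primrec.unpair.to_comp)))
  have hS : ∀ x, ∃ S, ∀ s, S ≤ s → approx (Encodable.encode c) s x = f x := fun x =>
    have ⟨t₀, ht₀⟩ := hGf x
    approx_encode_eventually_eq hc fun t ht => ht₀ t ht
  have hlim : Converges (Encodable.encode c) := fun x =>
    have ⟨S, hS⟩ := hS x
    ⟨S, fun s hs => by rw [hS s hs, hS S le_rfl]⟩
  exact ⟨_, hlim, fun x => have ⟨_, hS⟩ := hS x; limit_eq_of_eventually (hlim x) hS⟩

theorem delta02Fun_find {g : ℕ → ℕ} (hg : Delta02Fun g) {h : ℕ → ℕ} (hh : Primrec h)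
    (hex : ∀ j, ∃ n, h j ≤ g n) : Delta02Fun fun j => Nat.find (hex j) := by
  obtain ⟨e, he, hlim⟩ := exists_converges_limit_eq hg
  refine ⟨fun s j => (List.range s).findIdx fun n => decide (h j ≤ approx e s n), ?_, fun j => ?_⟩
  · exact (Primrec.list_findIdx (Primrec.list_range.comp Primrec.fst)
      (Primrec.nat_le.comp (hh.comp (Primrec.snd.comp Primrec.fst))
        (primrec_approx.comp ((Primrec.const e).pair ((Primrec.fst.comp Primrec.fst).pair
          Primrec.snd)))).decide.to₂).to_comp
  · beta_reduce
    set m := Nat.find (hex j)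
    refine ⟨m + 1 + ∑ n ∈ Finset.range (m + 1), settle e n, fun s hs => ?_⟩
    have hagree : ∀ n ≤ m, approx e s n = g n := fun n hn => by
      have := Finset.single_le_sum (f := settle e) (fun _ _ => Nat.zero_le _)
        (Finset.mem_range.2 (show n < m + 1 by omega))
      rw [approx_eq_limit (he n) (by omega), hlim]
    rw [List.findIdx_eq (by rw [List.length_range]; omega)]
    simp only [List.getElem_range, decide_eq_true_eq, decide_eq_false_iff_not, not_le]
    refine ⟨(hagree m le_rfl).symm ▸ Nat.find_spec (hex j), fun n hn => ?_⟩
    rw [hagree n hn.le]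
    exact not_le.1 (Nat.find_min (hex j) hn)

/-- `codePos b B (i + 1)` is the `i`-th element of `codeSet b B`; `codePos b B 0 = 0` only seeds
the recursion. -/
def codePos (b : ℕ → ℕ) (B : Seq2) : ℕ → ℕ
  | 0 => 0
  | i + 1 => 2 * (codePos b B i + b i + 1) + (B i).toNat

section CodePos

variable (b : ℕ → ℕ) (B : Seq2)

theorem codePos_strictMono : StrictMono (codePos b B) :=
  strictMono_nat_of_lt_succ fun i => by simp only [codePos]; omega

theorem lt_codePos_succ (i : ℕ) : b i < codePos b B (i + 1) := by
  simp only [codePos]; omega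

theorem decide_codePos_succ_odd (i : ℕ) : decide (codePos b B (i + 1) % 2 = 1) = B i := by
  cases h : B i <;> simp [codePos, h]

theorem codePos_congr {b' : ℕ → ℕ} {B' : Seq2} {k : ℕ} (hb : ∀ i < k, b i = b' i)
    (hB : ∀ i < k, B i = B' i) : ∀ i ≤ k, codePos b B i = codePos b' B' i
  | 0, _ => rfl
  | i + 1, hi => by
    simp only [codePos, codePos_congr hb hB i (by omega), hb i hi, hB i hi]

def codeList (k : ℕ) : List ℕ := (List.range k).map fun i => codePos b B (i + 1)

open Classical in
noncomputable def codeSet : Seq2 := fun x => decide (∃ i, codePos b B (i + 1) = x)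

theorem exists_le_codePos (n : ℕ) : ∃ i, n ≤ codePos b B (i + 1) :=
  ⟨n, ((codePos_strictMono b B).id_le n).trans ((codePos_strictMono b B).monotone (Nat.le_succ n))⟩

open Classical in
/-- The number of elements of the coding set below `n`. -/
noncomputable def codeCount (n : ℕ) : ℕ := Nat.find (exists_le_codePos b B n)

theorem lt_codeCount_iff {n i : ℕ} : i < codeCount b B n ↔ codePos b B (i + 1) < n := by
  classical
  rw [codeCount, Nat.lt_find_iff]
  refine ⟨fun h => not_le.1 (h i le_rfl), fun h m hm => not_le.2 (lt_of_le_of_lt ?_ h)⟩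
  exact (codePos_strictMono b B).monotone (by omega)

theorem mem_codeList_codeCount {n x : ℕ} :
    x ∈ codeList b B (codeCount b B n) ↔ x < n ∧ codeSet b B x := by
  simp only [codeList, codeSet, List.mem_map, List.mem_range, lt_codeCount_iff, decide_eq_true_eq]
  constructor
  · rintro ⟨i, hi, rfl⟩
    exact ⟨hi, i, rfl⟩
  · rintro ⟨hx, i, rfl⟩
    exact ⟨i, hx, rfl⟩

theorem restrict_codeSet (n : ℕ) :
    restrict (codeSet b B) n =
      (List.range n).map fun x => decide (x ∈ codeList b B (codeCount b B n)) := by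
  refine List.map_congr_left fun x hx => ?_
  rw [Bool.eq_iff_iff, decide_eq_true_iff, mem_codeList_codeCount,
    and_iff_right (List.mem_range.1 hx)]

theorem codeList_congr {b' : ℕ → ℕ} {B' : Seq2} {k : ℕ} (hb : ∀ i < k, b i = b' i)
    (hB : ∀ i < k, B i = B' i) : codeList b B k = codeList b' B' k :=
  List.map_congr_left fun i hi => codePos_congr b B hb hB (i + 1) (List.mem_range.1 hi)

end CodePos

theorem primrec_codePos {α : Type*} [Primcodable α] {b : α → ℕ → ℕ} {B : α → Seq2}
    (hb : Primrec₂ b) (hB : Primrec₂ B) : Primrec₂ fun a i => codePos (b a) (B a) i := by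
  have hstep : Primrec₂ fun (a : α × ℕ) (p : ℕ × ℕ) =>
      2 * (p.2 + b a.1 p.1 + 1) + (B a.1 p.1).toNat :=
    (Primrec.nat_add.comp (Primrec.nat_mul.comp (Primrec.const 2)
      (Primrec.nat_add.comp (Primrec.nat_add.comp (Primrec.snd.comp Primrec.snd)
        (hb.comp (Primrec.fst.comp Primrec.fst) (Primrec.fst.comp Primrec.snd)))
        (Primrec.const 1)))
      ((Primrec.dom_bool Bool.toNat).comp
        (hB.comp (Primrec.fst.comp Primrec.fst) (Primrec.fst.comp Primrec.snd)))).to₂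
  refine (Primrec.nat_rec' Primrec.snd (Primrec.const 0) hstep).of_eq fun a => ?_
  induction a.2 with
  | zero => rfl
  | succ i ih => simp only [codePos, ← ih]

def ones (σ : BinStr) : List ℕ := (List.range σ.length).filter fun x => σ.getD x false

theorem ones_prefix {σ τ : BinStr} (h : σ <+: τ) : ones σ <+: ones τ := by
  obtain ⟨ρ, rfl⟩ := h
  have hfilter : ((List.range σ.length).filter fun x => (σ ++ ρ).getD x false) = ones σ :=
    List.filter_congr fun x hx => by rw [List.getD_append _ _ _ _ (List.mem_range.1 hx)]
  simp only [ones, List.length_append, List.range_add, List.filter_append, hfilter]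
  exact List.prefix_append _ _

theorem ones_restrict (A : Seq2) (k : ℕ) : ones (restrict A k) = (List.range k).filter A := by
  simp only [ones, restrict, List.length_map, List.length_range]
  refine List.filter_congr fun x hx => ?_
  simp [List.getD_eq_getElem?_getD, List.getElem?_range (List.mem_range.1 hx)]

theorem ones_restrict_codeSet (b : ℕ → ℕ) (B : Seq2) (n : ℕ) :
    ones (restrict (codeSet b B) n) = codeList b B (codeCount b B n) := by
  rw [ones_restrict]
  refine (List.pairwise_lt_range.filter _).eq_of_mem_iff
    (List.pairwise_map.2 (List.pairwise_lt_range.imp fun h => codePos_strictMono b B (by omega)))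
    fun x => ?_
  rw [List.mem_filter, List.mem_range, mem_codeList_codeCount]

def nthOneOdd (τ : BinStr) (n : ℕ) : Bool := decide ((ones τ).getD n 0 % 2 = 1)

def parityAxiom (s : ℕ) : Option (BinStr × ℕ × Bool) :=
  (Encodable.decode (α := BinStr × ℕ) s).bind fun q =>
    if q.2 < (ones q.1).length then some (q.1, q.2, nthOneOdd q.1 q.2) else none

theorem parityAxiom_eq_some {s : ℕ} {τ : BinStr} {n : ℕ} {b : Bool}
    (h : parityAxiom s = some (τ, n, b)) : n < (ones τ).length ∧ b = nthOneOdd τ n := by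
  simp only [parityAxiom, Option.bind_eq_some_iff] at h
  obtain ⟨⟨τ', n'⟩, -, h⟩ := h
  split_ifs at h with hlt
  cases h
  exact ⟨hlt, rfl⟩

theorem parityAxiom_consistent (s t : ℕ) (τ₁ : BinStr) (n₁ : ℕ) (b₁ : Bool) (τ₂ : BinStr) (n₂ : ℕ)
    (b₂ : Bool) (h₁ : parityAxiom s = some (τ₁, n₁, b₁)) (h₂ : parityAxiom t = some (τ₂, n₂, b₂))
    (hτ : τ₁ <+: τ₂ ∨ τ₂ <+: τ₁) (hn : n₁ = n₂) : b₁ = b₂ := by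
  obtain ⟨hlt₁, rfl⟩ := parityAxiom_eq_some h₁
  obtain ⟨hlt₂, rfl⟩ := parityAxiom_eq_some h₂
  subst hn
  have key : ∀ {σ ρ : BinStr}, σ <+: ρ → n₁ < (ones σ).length → nthOneOdd σ n₁ = nthOneOdd ρ n₁ :=
    fun hσρ hlt => by
      obtain ⟨r, hr⟩ := ones_prefix hσρ
      rw [nthOneOdd, nthOneOdd, ← hr, List.getD_append _ _ _ _ hlt]
  rcases hτ with h | h
  · exact key h hlt₁
  · exact (key h hlt₂).symm

theorem primrec_ones : Primrec ones := by
  have hp : PrimrecRel fun (σ : BinStr) (x : ℕ) => σ.getD x false = true :=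
    Primrec.eq.comp (Primrec.list_getD false) (Primrec.const true)
  refine (Primrec.listFilterMap (Primrec.list_range.comp Primrec.list_length)
    (Primrec.ite hp (Primrec.option_some.comp Primrec.snd) (Primrec.const none)).to₂).of_eq
    fun σ => ?_
  rw [ones, ← List.filterMap_eq_filter]
  rfl

theorem computable_parityAxiom : Computable parityAxiom := by
  have hones : Primrec fun q : BinStr × ℕ => ones q.1 := primrec_ones.comp Primrec.fst
  have hodd : Primrec fun q : BinStr × ℕ => nthOneOdd q.1 q.2 :=
    (Primrec.eq.comp (Primrec.nat_mod.comp ((Primrec.list_getD 0).comp hones Primrec.snd)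
      (Primrec.const 2)) (Primrec.const 1)).decide
  have hval : Primrec fun q : BinStr × ℕ =>
      if q.2 < (ones q.1).length then some (q.1, q.2, nthOneOdd q.1 q.2) else none :=
    Primrec.ite (Primrec.nat_lt.comp Primrec.snd (Primrec.list_length.comp hones))
      (Primrec.option_some.comp (Primrec.fst.pair (Primrec.snd.pair hodd))) (Primrec.const none)
  exact Computable.option_bind Computable.decode (hval.to_comp.comp Computable.snd).to₂

def parityFunctional : TuringFunctional where
  axioms := parityAxiom
  axioms_computable := computable_parityAxiom
  consistent := parityAxiom_consistent

theorem parityFunctional_computes {A B : Seq2}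
    (h : ∀ j, ∃ k, j < (ones (restrict A k)).length ∧ nthOneOdd (restrict A k) j = B j) :
    parityFunctional.Computes A B := by
  intro j
  obtain ⟨k, hlt, hodd⟩ := h j
  refine ⟨Encodable.encode (restrict A k, j), k, ?_⟩
  simp [parityFunctional, parityAxiom, hlt, hodd]

theorem turingLE_codeSet (b : ℕ → ℕ) (B : Seq2) : TuringLE B (codeSet b B) := by
  refine ⟨parityFunctional, parityFunctional_computes fun j => ⟨codePos b B (j + 1) + 1, ?_⟩⟩
  have hcount : codeCount b B (codePos b B (j + 1) + 1) = j + 1 := by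
    refine le_antisymm (not_lt.1 fun h => ?_) (lt_codeCount_iff b B |>.2 (by omega))
    have := (lt_codeCount_iff b B).1 h
    have := codePos_strictMono b B (show j + 1 < j + 1 + 1 by omega)
    omega
  simp [nthOneOdd, ones_restrict_codeSet, hcount, codeList, List.getD_eq_getElem?_getD,
    decide_codePos_succ_odd]

theorem KOr_le_length {U : UniversalPrefixMachine} {A : Seq2} {p y : BinStr}
    (h : U.toPrefixOracleMachine.Computes A p y) : KOr U A y ≤ p.length :=
  Nat.sInf_le ⟨p, rfl, h⟩

theorem exists_length_eq_KOr (U : UniversalPrefixMachine) (A : Seq2) (y : BinStr) :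
    ∃ p : BinStr, p.length = KOr U A y ∧ U.toPrefixOracleMachine.Computes A p y :=
  Nat.sInf_mem (s := {n | ∃ p : BinStr, p.length = n ∧ U.toPrefixOracleMachine.Computes A p y})
    (have ⟨p, hp⟩ := U.total A y; ⟨p.length, p, rfl, hp⟩)

def selfDelimit (l : List Bool) : List Bool := (l.flatMap fun b => [true, b]) ++ [false]

theorem selfDelimit_cons (b : Bool) (l : List Bool) :
    selfDelimit (b :: l) = true :: b :: selfDelimit l := by
  simp [selfDelimit]

theorem length_selfDelimit (l : List Bool) : (selfDelimit l).length = 2 * l.length + 1 := by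
  induction l with
  | nil => rfl
  | cons b l ih => rw [selfDelimit_cons]; simp only [List.length_cons, ih]; ring

theorem eq_of_selfDelimit_prefix :
    ∀ {l₁ l₂ : List Bool}, selfDelimit l₁ <+: selfDelimit l₂ → l₁ = l₂
  | [], [], _ => rfl
  | [], _ :: _, h => by simp [selfDelimit] at h
  | _ :: _, [], h => by simp [selfDelimit] at h
  | b₁ :: l₁, b₂ :: l₂, h => by
    rw [selfDelimit_cons, selfDelimit_cons, List.cons_prefix_cons, List.cons_prefix_cons] at h
    rw [h.2.1, eq_of_selfDelimit_prefix h.2.2]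

theorem primrec_selfDelimit : Primrec selfDelimit :=
  Primrec.list_append.comp (Primrec.list_flatMap Primrec.id
    ((Primrec.dom_bool fun b => [true, b]).comp Primrec.snd).to₂) (Primrec.const [false])

theorem replicate_false_prefix_or_prefix (a b : ℕ) :
    List.replicate a false <+: List.replicate b false ∨
      List.replicate b false <+: List.replicate a false := by
  rcases le_total a b with h | h
  · left
    obtain ⟨k, rfl⟩ := Nat.exists_eq_add_of_le h
    rw [List.replicate_add]; exact List.prefix_append _ _
  · right
    obtain ⟨k, rfl⟩ := Nat.exists_eq_add_of_le h
    rw [List.replicate_add]; exact List.prefix_append _ _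

/-- On program `q ++ selfDelimit l`, where `q` is an oracle-free `U`-program for `0ⁿ`,
output `D n l`. -/
def compressAxiom (U : UniversalPrefixMachine) (D : ℕ → List Bool → BinStr) (s : ℕ) :
    Option (BinStr × BinStr × BinStr) :=
  (Encodable.decode (α := List Bool) s.unpair.2).bind fun l =>
    (U.axioms s.unpair.1).bind fun z =>
      if (∀ b ∈ z.1, b = false) ∧ ∀ b ∈ z.2.2, b = false then
        some ([], z.2.1 ++ selfDelimit l, D z.2.2.length l)
      else none

theorem compressAxiom_eq_some {U : UniversalPrefixMachine} {D : ℕ → List Bool → BinStr} {s : ℕ}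
    {τ p y : BinStr} (h : compressAxiom U D s = some (τ, p, y)) :
    ∃ l a q n, U.axioms s.unpair.1 = some (List.replicate a false, q, List.replicate n false) ∧
      p = q ++ selfDelimit l ∧ y = D n l := by
  simp only [compressAxiom, Option.bind_eq_some_iff] at h
  obtain ⟨l, -, ⟨σ, q, w⟩, hax, h⟩ := h
  split_ifs at h with hz
  cases h
  refine ⟨l, σ.length, q, w.length, ?_, rfl, rfl⟩
  rw [hax, ← List.eq_replicate_iff.2 ⟨rfl, hz.1⟩, ← List.eq_replicate_iff.2 ⟨rfl, hz.2⟩]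

theorem compressAxiom_consistent (U : UniversalPrefixMachine) (D : ℕ → List Bool → BinStr)
    (s t : ℕ) (τ₁ p₁ y₁ τ₂ p₂ y₂ : BinStr) (h₁ : compressAxiom U D s = some (τ₁, p₁, y₁))
    (h₂ : compressAxiom U D t = some (τ₂, p₂, y₂)) (_ : τ₁ <+: τ₂ ∨ τ₂ <+: τ₁)
    (hp : p₁ <+: p₂) : p₁ = p₂ ∧ y₁ = y₂ := by
  obtain ⟨l₁, a₁, q₁, n₁, hax₁, rfl, rfl⟩ := compressAxiom_eq_some h₁
  obtain ⟨l₂, a₂, q₂, n₂, hax₂, rfl, rfl⟩ := compressAxiom_eq_some h₂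
  have hU := U.consistent _ _ _ _ _ _ _ _ hax₁ hax₂ (replicate_false_prefix_or_prefix a₁ a₂)
  have hU' := U.consistent _ _ _ _ _ _ _ _ hax₂ hax₁ (replicate_false_prefix_or_prefix a₂ a₁)
  obtain ⟨rfl, hn⟩ : q₁ = q₂ ∧ List.replicate n₁ false = List.replicate n₂ false := by
    rcases List.prefix_or_prefix_of_prefix ((List.prefix_append _ _).trans hp)
      (List.prefix_append _ _) with h | h
    · exact hU h
    · exact ⟨(hU' h).1.symm, (hU' h).2.symm⟩
  obtain rfl := eq_of_selfDelimit_prefix ((List.prefix_append_right_inj q₁).1 hp)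
  obtain rfl : n₁ = n₂ := by simpa using congrArg List.length hn
  exact ⟨rfl, rfl⟩

theorem computable_compressAxiom (U : UniversalPrefixMachine) {D : ℕ → List Bool → BinStr}
    (hD : Computable₂ D) : Computable (compressAxiom U D) := by
  have hzeros : PrimrecPred fun σ : BinStr => ∀ b ∈ σ, b = false :=
    PrimrecPred.forall_mem_list (Primrec.eq.comp Primrec.id (Primrec.const false))
  have hcond : Computable fun a : (ℕ × List Bool) × BinStr × BinStr × BinStr =>
      decide ((∀ b ∈ a.2.1, b = false) ∧ ∀ b ∈ a.2.2.2, b = false) :=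
    ((hzeros.comp (Primrec.fst.comp Primrec.snd)).and
      (hzeros.comp (Primrec.snd.comp (Primrec.snd.comp Primrec.snd)))).decide.to_comp
  have hout : Computable fun a : (ℕ × List Bool) × BinStr × BinStr × BinStr =>
      (some ([], a.2.2.1 ++ selfDelimit a.1.2, D a.2.2.2.length a.1.2) :
        Option (BinStr × BinStr × BinStr)) :=
    Computable.option_some.comp ((Computable.const []).pair
      ((Primrec.list_append.comp (Primrec.fst.comp (Primrec.snd.comp Primrec.snd))
        (primrec_selfDelimit.comp (Primrec.snd.comp Primrec.fst))).to_comp.pair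
      (hD.comp (Primrec.list_length.comp (Primrec.snd.comp (Primrec.snd.comp
        Primrec.snd))).to_comp (Primrec.snd.comp Primrec.fst).to_comp)))
  have hbranch : Computable fun a : (ℕ × List Bool) × BinStr × BinStr × BinStr =>
      if (∀ b ∈ a.2.1, b = false) ∧ ∀ b ∈ a.2.2.2, b = false then
        some ([], a.2.2.1 ++ selfDelimit a.1.2, D a.2.2.2.length a.1.2)
      else none :=
    (Computable.cond hcond hout (Computable.const none)).of_eq fun _ => Bool.cond_decide _ _ _
  exact Computable.option_bind (Computable.decode.comp (Primrec.snd.comp Primrec.unpair).to_comp)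
    (Computable.option_bind (U.axioms_computable.comp
      (Primrec.fst.comp (Primrec.unpair.comp Primrec.fst)).to_comp) hbranch.to₂).to₂

def compressMachine (U : UniversalPrefixMachine) {D : ℕ → List Bool → BinStr}
    (hD : Computable₂ D) : PrefixOracleMachine where
  axioms := compressAxiom U D
  axioms_computable := computable_compressAxiom U hD
  consistent := compressAxiom_consistent U D

theorem compressMachine_computes {U : UniversalPrefixMachine} {D : ℕ → List Bool → BinStr}
    (hD : Computable₂ D) {q : BinStr} {n : ℕ}
    (hq : U.toPrefixOracleMachine.Computes zeroSeq q (List.replicate n false)) (l : List Bool) :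
    (compressMachine U hD).Computes zeroSeq (q ++ selfDelimit l) (D n l) := by
  obtain ⟨s, τ, hax, k, rfl⟩ := hq
  refine ⟨Nat.pair s (Encodable.encode l), [], ?_, 0, rfl⟩
  simp [compressMachine, compressAxiom, hax, restrict, zeroSeq]

theorem exists_Kc_le_KcNat_add (U : UniversalPrefixMachine) {D : ℕ → List Bool → BinStr}
    (hD : Computable₂ D) : ∃ c, ∀ n l, Kc U (D n l) ≤ KcNat U n + 2 * l.length + 1 + c := by
  obtain ⟨c, hc⟩ := U.universal (compressMachine U hD)
  refine ⟨c, fun n l => ?_⟩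
  obtain ⟨p, hp, hpn⟩ := exists_length_eq_KOr U zeroSeq (List.replicate n false)
  obtain ⟨q, hq, hqlen⟩ := hc zeroSeq _ _ (compressMachine_computes hD hpn l)
  have := KOr_le_length hq
  rw [List.length_append, length_selfDelimit, hp] at hqlen
  rw [Kc, KcNat, Kc]
  omega

open Classical in
noncomputable def cost (e x : ℕ) : ℕ := if Converges e then settle e x + limit e x else 0

/-- The stage-`n` estimate of `cost e x`, given whether `e` converges. -/
def costAt (n : ℕ) (converges : Bool) (e x : ℕ) : ℕ :=
  if converges then settleAt n e x + approx e n x else 0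

open Classical in
theorem costAt_eq_cost {n e x : ℕ} (h : cost e x < n) :
    costAt n (decide (Converges e)) e x = cost e x := by
  by_cases he : Converges e
  · have hs : settle e x ≤ n := by simp only [cost, if_pos he] at h; omega
    simp [costAt, cost, he, settleAt_eq (he x) hs, approx_eq_limit (he x) hs]
  · simp [costAt, cost, he]

def stepBound (c : ℕ → ℕ → ℕ) (i : ℕ) : ℕ := ((List.range (i + 1)).map fun e => c e i).sum

theorem le_stepBound (c : ℕ → ℕ → ℕ) {e i : ℕ} (h : e ≤ i) : c e i ≤ stepBound c i :=
  List.le_sum_of_mem (List.mem_map.2 ⟨e, List.mem_range.2 (by omega), rfl⟩)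

theorem exists_forall_lt_codePos {f : ℕ → ℕ} (hf : Delta02Fun f) (B : Seq2) :
    ∃ e, ∀ i, e ≤ i → f i < codePos (stepBound cost) B (i + 1) := by
  obtain ⟨e, he, hlim⟩ := exists_converges_limit_eq hf
  refine ⟨e, fun i hi => ?_⟩
  calc f i = limit e i := (hlim i).symm
    _ ≤ cost e i := by classical simp [cost, he]
    _ ≤ stepBound cost i := le_stepBound cost hi
    _ < codePos (stepBound cost) B (i + 1) := lt_codePos_succ _ B i

open Classical in
noncomputable def payload (B : Seq2) (k : ℕ) : List Bool :=
  (List.range k).map (fun e => decide (Converges e)) ++ (List.range k).map B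

theorem length_payload (B : Seq2) (k : ℕ) : (payload B k).length = 2 * k := by
  simp [payload, two_mul]

/-- With `k = l.length / 2`, reads convergence flags for `e < k` and bits `B i` for `i < k` off `l`,
and returns the first `n` bits of the set whose first `k` elements these determine, estimating the
costs at stage `n`. -/
def decode (n : ℕ) (l : List Bool) : BinStr :=
  (List.range n).map fun x => decide (x ∈ codeList
    (stepBound fun e => costAt n (l.getD e false) e)
    (fun i => l.getD (l.length / 2 + i) false) (l.length / 2))

open Classical in
theorem decode_payload (B : Seq2) (n : ℕ) :
    decode n (payload B (codeCount (stepBound cost) B n)) =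
      restrict (codeSet (stepBound cost) B) n := by
  set k := codeCount (stepBound cost) B n
  have hlen : (payload B k).length / 2 = k := by rw [length_payload]; omega
  rw [restrict_codeSet, decode, hlen, codeList_congr (b' := stepBound cost) (B' := B)]
  · intro i hi
    refine congrArg List.sum (List.map_congr_left fun e he => ?_)
    have hei : e ≤ i := Nat.lt_succ_iff.1 (List.mem_range.1 he)
    have hflag : (payload B k).getD e false = decide (Converges e) := by
      rw [payload, List.getD_append _ _ _ _ (by simp; omega)]
      simp [List.getD_eq_getElem?_getD, List.getElem?_range (show e < k by omega)]
    simp only [hflag]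
    rw [costAt_eq_cost]
    calc cost e i ≤ stepBound cost i := le_stepBound cost hei
      _ < codePos (stepBound cost) B (i + 1) := lt_codePos_succ _ B i
      _ < n := (lt_codeCount_iff _ B).1 hi
  · intro i hi
    rw [payload, List.getD_append_right _ _ _ _ (by simp)]
    simp [List.getD_eq_getElem?_getD, List.getElem?_range hi]

section Primrec
open Primrec

theorem primrec_list_sum : Primrec (List.sum : List ℕ → ℕ) :=
  (list_foldr .id (const 0) (nat_add.comp (fst.comp snd) (snd.comp snd)).to₂).of_eq
    fun _ => List.sum_eq_foldr.symm

theorem primrec_decode : Primrec₂ decode := by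
  have hcostAt : Primrec₂ fun (a : ℕ × List Bool) (p : ℕ × ℕ) =>
      costAt a.1 (a.2.getD p.1 false) p.1 p.2 := by
    have happrox : Primrec fun q : (ℕ × List Bool) × ℕ × ℕ => approx q.2.1 q.1.1 q.2.2 :=
      primrec_approx.comp ((fst.comp snd).pair ((fst.comp fst).pair (snd.comp snd)))
    have hsettle : Primrec fun q : (ℕ × List Bool) × ℕ × ℕ => settleAt q.1.1 q.2.1 q.2.2 :=
      primrec_settleAt.comp ((fst.comp fst).pair ((fst.comp snd).pair (snd.comp snd)))
    refine (cond ((list_getD false).comp (snd.comp fst) (fst.comp snd))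
      (nat_add.comp hsettle happrox) (const 0)).to₂.of_eq fun a p => ?_
    simp only [costAt]
    cases a.2.getD p.1 false <;> rfl
  have hbound : Primrec₂ fun (a : ℕ × List Bool) (i : ℕ) =>
      stepBound (fun e => costAt a.1 (a.2.getD e false) e) i :=
    (primrec_list_sum.comp (list_map (list_range.comp (succ.comp snd))
      (hcostAt.comp (fst.comp fst) (snd.pair (snd.comp fst))).to₂)).to₂
  have hbits : Primrec₂ fun (a : ℕ × List Bool) (i : ℕ) => a.2.getD (a.2.length / 2 + i) false :=
    (list_getD false).comp (snd.comp fst)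
      (nat_add.comp (nat_div.comp (list_length.comp (snd.comp fst)) (const 2)) snd)
  have hlist : Primrec fun a : ℕ × List Bool => codeList
      (stepBound fun e => costAt a.1 (a.2.getD e false) e)
      (fun i => a.2.getD (a.2.length / 2 + i) false) (a.2.length / 2) :=
    list_map (list_range.comp (nat_div.comp (list_length.comp snd) (const 2)))
      ((primrec_codePos hbound hbits).comp fst (succ.comp snd)).to₂
  have hmem : Primrec₂ fun (L : List ℕ) (x : ℕ) => decide (x ∈ L) :=
    (PrimrecRel.exists_mem_list Primrec.eq).of_eq (fun L x => by simp) |>.decide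
  exact (list_map (list_range.comp fst) (hmem.comp (hlist.comp fst) snd).to₂).to₂

end Primrec

theorem exists_Kc_restrict_le (B : Seq2) (U : UniversalPrefixMachine) :
    ∃ c, ∀ n, Kc U (restrict (codeSet (stepBound cost) B) n) ≤
      KcNat U n + 4 * codeCount (stepBound cost) B n + 1 + c := by
  obtain ⟨c, hc⟩ := exists_Kc_le_KcNat_add U primrec_decode.to_comp
  refine ⟨c, fun n => ?_⟩
  have hK := hc n (payload B (codeCount (stepBound cost) B n))
  rw [decode_payload, length_payload] at hK
  omega

theorem ktDelta_codeSet (U : UniversalPrefixMachine) (B : Seq2) :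
    KTDelta U (codeSet (stepBound cost) B) := by
  intro g hg hord
  have hex : ∀ j, ∃ n, 4 * (j + 1) ≤ g n := fun j => (hord.2 (4 * (j + 1))).imp fun _ h => h.le
  obtain ⟨e, he⟩ := exists_forall_lt_codePos
    (delta02Fun_find hg (Primrec.nat_mul.comp (Primrec.const 4) Primrec.succ) hex) B
  obtain ⟨c, hc⟩ := exists_Kc_restrict_le B U
  refine ⟨c + 4 * e + 1, fun n => ?_⟩
  set k := codeCount (stepBound cost) B n
  have hk : 4 * k ≤ g n + 4 * e := by
    rcases Nat.lt_or_ge k (e + 1) with hk | hk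
    · omega
    obtain ⟨i, hi⟩ : ∃ i, k = i + 1 := ⟨k - 1, by omega⟩
    have hfind := (he i (by omega)).trans ((lt_codeCount_iff _ B).1 (show i < k by omega))
    have := (Nat.find_spec (hex i)).trans (hord.1 hfind.le)
    omega
  have := hc n
  omega

end KTrivialCofinal

/-- for any real B there is A ≥_T B with A ∈ KT(Δ⁰₂); KT(Δ⁰₂) is cofinal in the Turing degrees. -/
theorem stmt5 (U : UniversalPrefixMachine) (B : Seq2) :
    ∃ A : Seq2, TuringLE B A ∧ KTDelta U A :=
  ⟨_, KTrivialCofinal.turingLE_codeSet _ B, KTrivialCofinal.ktDelta_codeSet U B⟩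
end
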